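/- Let c ≥ 1/2 and K > 0. There exists a constant C = C(c, K) such that for every sequence a = (a_n)_{n≥0} of complex numbers with ‖a‖_{c,K} < ∞, the series defining (D a)_n = (n+2) Σ_{m > n, m − n odd} a_m converges absolutely for every n, and for every n ≥ 1 one has ‖D a‖_{c,K,n} = (n/K)^{c n} |(D a)_n| ≤ C · n^{1−c} · sup_{m ≥ n+1} ‖a‖_{c,K,m}. -/

import Mathlib

open MeasureTheory Real Filter Finset

/-- `‖a‖_{c,K,n} = (n/K)^{c n} |a_n|` (with `(0/K)^0 = 1`, which is `Real.rpow`'s convention). -/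
noncomputable def seqNorm (c K : ℝ) (a : ℕ → ℂ) (n : ℕ) : ℝ :=
  ((n : ℝ) / K) ^ (c * n) * ‖a n‖

/-- The operator `D`: `(D a)_n = (n+2) Σ_{m > n, m − n odd} a_m`, i.e.
`(D a)_n = (n+2) Σ_{j≥0} a_{n+2j+1}` (interpreted via `tsum`). -/
noncomputable def Dop (a : ℕ → ℂ) (n : ℕ) : ℂ :=
  ((n : ℂ) + 2) * ∑' j : ℕ, a (n + 2 * j + 1)

/-!
For `m = n + 2j + 1` we have `‖a_m‖ ≤ S (K/m)^{cm}`, with `S` the supremum of `‖a‖_{c,K,·}`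
beyond `n`, and the weight of that term in `‖D a‖_{c,K,n}` is
`(n/K)^{cn} (K/m)^{cm} = (n/m)^{cn} (K/m)^{c(2j+1)} ≤ (K/n)^c ((K/(2j+1))^{2c})^j`.
The base `(K/(2j+1))^{2c}` tends to `0`, so these bounds are summable in `j` uniformly in `n`,
and `(n+2)(K/n)^c ≤ 3 K^c n^{1-c}` gives the factor `n^{1-c}`.
-/

open scoped Topology

theorem summable_pow_self_of_tendsto_zero {R : Type*} [NormedRing R] [CompleteSpace R]
    {x : ℕ → R} (hx : Tendsto x atTop (𝓝 0)) : Summable fun n => x n ^ n := by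
  have hsmall : ∀ᶠ n in atTop, ‖x n‖ ≤ 1 / 2 :=
    (tendsto_zero_iff_norm_tendsto_zero.mp hx).eventually (ge_mem_nhds (by norm_num))
  refine summable_geometric_two.of_norm_bounded_eventually_nat ?_
  filter_upwards [hsmall, eventually_gt_atTop 0] with n hn hn0
  calc ‖x n ^ n‖ ≤ ‖x n‖ ^ n := norm_pow_le' _ hn0
    _ ≤ (1 / 2) ^ n := by gcongr

section
variable {c K : ℝ}

theorem tendsto_const_div_rpow_atTop_nhds_zero (hc : 0 < c) :
    Tendsto (fun x : ℝ => (K / x) ^ c) atTop (𝓝 0) := by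
  simpa [zero_rpow hc.ne'] using
    ((tendsto_const_nhds (x := K)).div_atTop tendsto_id).rpow_const (Or.inr hc.le)

theorem summable_div_rpow_mul_self (hc : 0 < c) (hK : 0 ≤ K) :
    Summable fun m : ℕ => (K / m) ^ (c * m) := by
  have h := summable_pow_self_of_tendsto_zero
    ((tendsto_const_div_rpow_atTop_nhds_zero hc (K := K)).comp tendsto_natCast_atTop_atTop)
  refine h.congr fun m => ?_
  simp only [Function.comp_apply, ← rpow_natCast, ← rpow_mul (div_nonneg hK m.cast_nonneg)]

theorem summable_div_odd_rpow_pow (hc : 0 < c) :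
    Summable fun j : ℕ => ((K / (2 * j + 1)) ^ (2 * c)) ^ j := by
  have hodd : Tendsto (fun j : ℕ => 2 * (j : ℝ) + 1) atTop atTop :=
    tendsto_atTop_add_const_right _ _
      (tendsto_natCast_atTop_atTop.const_mul_atTop two_pos)
  exact summable_pow_self_of_tendsto_zero
    ((tendsto_const_div_rpow_atTop_nhds_zero (by positivity)).comp hodd)

theorem seqNorm_nonneg (hK : 0 < K) (a : ℕ → ℂ) (n : ℕ) : 0 ≤ seqNorm c K a n := by
  unfold seqNorm
  positivity

theorem norm_eq_div_rpow_mul_seqNorm (hK : 0 < K) (a : ℕ → ℂ) {m : ℕ} (hm : m ≠ 0) :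
    ‖a m‖ = (K / m) ^ (c * m) * seqNorm c K a m := by
  have hm0 : (0 : ℝ) < m := by positivity
  rw [seqNorm, ← mul_assoc, ← mul_rpow (by positivity) (by positivity),
    div_mul_div_cancel₀ hm0.ne', div_self hK.ne', one_rpow, one_mul]

theorem summable_norm_of_bddAbove_seqNorm (hc : 0 < c) (hK : 0 < K) {a : ℕ → ℂ}
    (ha : BddAbove (Set.range (seqNorm c K a))) : Summable fun m => ‖a m‖ := by
  obtain ⟨S, hS⟩ := ha
  refine ((summable_div_rpow_mul_self hc hK.le).mul_right S).of_norm_bounded_eventually_nat ?_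
  filter_upwards [eventually_ne_atTop 0] with m hm
  rw [norm_norm, norm_eq_div_rpow_mul_seqNorm hK a hm]
  exact mul_le_mul_of_nonneg_left (hS ⟨m, rfl⟩) (by positivity)

theorem div_rpow_mul_div_rpow_le (hc : 0 ≤ c) (hK : 0 < K) {n : ℕ} (hn : n ≠ 0) (j : ℕ) :
    ((n : ℝ) / K) ^ (c * n) * (K / (n + 2 * j + 1 : ℕ)) ^ (c * (n + 2 * j + 1 : ℕ)) ≤
      (K / n) ^ c * ((K / (2 * j + 1)) ^ (2 * c)) ^ j := by
  have hn0 : (0 : ℝ) < n := by positivity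
  push_cast
  set m : ℝ := n + 2 * j + 1
  have hm0 : 0 < m := by positivity
  have hsplit :
      (K / m) ^ (c * m) = (K / m) ^ (c * n) * (K / m) ^ c * ((K / m) ^ (2 * c)) ^ j := by
    rw [← rpow_natCast, ← rpow_mul (by positivity), ← rpow_add (by positivity),
      ← rpow_add (by positivity)]
    congr 1
    ring
  have hnm : (n : ℝ) ≤ m := by simp only [m]; linarith [(j.cast_nonneg : (0 : ℝ) ≤ j)]
  have hjm : 2 * (j : ℝ) + 1 ≤ m := by simp only [m]; linarith
  have hratio : ((n : ℝ) / K) ^ (c * n) * (K / m) ^ (c * n) ≤ 1 := by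
    rw [← mul_rpow (by positivity) (by positivity)]
    refine rpow_le_one (by positivity) ?_ (by positivity)
    rw [div_mul_div_comm, div_le_one (by positivity)]
    nlinarith
  calc ((n : ℝ) / K) ^ (c * n) * (K / m) ^ (c * m)
      = (((n : ℝ) / K) ^ (c * n) * (K / m) ^ (c * n)) *
          ((K / m) ^ c * ((K / m) ^ (2 * c)) ^ j) := by
        rw [hsplit]; ring
    _ ≤ 1 * ((K / n) ^ c * ((K / (2 * j + 1)) ^ (2 * c)) ^ j) := by
        gcongr
    _ = _ := one_mul _

theorem weighted_norm_le_iSup_seqNorm (hc : 0 ≤ c) (hK : 0 < K) {a : ℕ → ℂ}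
    (ha : BddAbove (Set.range (seqNorm c K a))) {n : ℕ} (hn : n ≠ 0) (j : ℕ) :
    ((n : ℝ) / K) ^ (c * n) * ‖a (n + 2 * j + 1)‖ ≤
      (⨆ i, seqNorm c K a (n + 1 + i)) * ((K / n) ^ c * ((K / (2 * j + 1)) ^ (2 * c)) ^ j) := by
  have htail : seqNorm c K a (n + 2 * j + 1) ≤ ⨆ i, seqNorm c K a (n + 1 + i) := by
    rw [show n + 2 * j + 1 = n + 1 + 2 * j by ring]
    exact le_ciSup (ha.mono (Set.range_comp_subset_range _ _)) (2 * j)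
  rw [norm_eq_div_rpow_mul_seqNorm hK a (by omega), ← mul_assoc, mul_comm _ (_ * _)]
  exact mul_le_mul (div_rpow_mul_div_rpow_le hc hK hn j) htail (seqNorm_nonneg hK a _)
    (by positivity)

theorem seqNorm_Dop_le_tsum (hK : 0 < K) {a : ℕ → ℂ} {n : ℕ}
    (ha : Summable fun j => ‖a (n + 2 * j + 1)‖) :
    seqNorm c K (Dop a) n ≤
      (n + 2) * ∑' j, ((n : ℝ) / K) ^ (c * n) * ‖a (n + 2 * j + 1)‖ := by
  have hnorm : ‖(n : ℂ) + 2‖ = n + 2 := by exact_mod_cast Complex.norm_natCast (n + 2)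
  rw [seqNorm, Dop, norm_mul, hnorm, tsum_mul_left, mul_left_comm]
  gcongr
  exact norm_tsum_le_tsum_norm ha

theorem tsum_weighted_norm_le (hc : 0 < c) (hK : 0 < K) {a : ℕ → ℂ}
    (ha : BddAbove (Set.range (seqNorm c K a))) {n : ℕ} (hn : n ≠ 0)
    (hsum : Summable fun j => ‖a (n + 2 * j + 1)‖) :
    ∑' j, ((n : ℝ) / K) ^ (c * n) * ‖a (n + 2 * j + 1)‖ ≤
      (⨆ i, seqNorm c K a (n + 1 + i)) *
        ((K / n) ^ c * ∑' j : ℕ, ((K / (2 * j + 1)) ^ (2 * c)) ^ j) := by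
  rw [← tsum_mul_left, ← tsum_mul_left]
  exact (hsum.mul_left _).tsum_le_tsum (weighted_norm_le_iSup_seqNorm hc.le hK ha hn)
    (((summable_div_odd_rpow_pow hc).mul_left _).mul_left _)

theorem add_two_mul_div_rpow_le (hK : 0 ≤ K) {n : ℕ} (hn : n ≠ 0) :
    (n + 2 : ℝ) * (K / n) ^ c ≤ 3 * K ^ c * (n : ℝ) ^ (1 - c) := by
  have hn1 : (1 : ℝ) ≤ n := by exact_mod_cast Nat.one_le_iff_ne_zero.mpr hn
  rw [div_rpow hK (by positivity), rpow_sub (by positivity), rpow_one]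
  have hnc : 0 < (n : ℝ) ^ c := by positivity
  rw [mul_div_assoc', mul_div_assoc', div_le_div_iff_of_pos_right hnc]
  nlinarith [rpow_nonneg hK c]

end

theorem Dop_bound (c K : ℝ) (hc : 1 / 2 ≤ c) (hK : 0 < K) :
    ∃ C : ℝ, ∀ a : ℕ → ℂ, BddAbove (Set.range (seqNorm c K a)) →
      (∀ n : ℕ, Summable (fun j : ℕ => a (n + 2 * j + 1))) ∧
      ∀ n : ℕ, 1 ≤ n →
        seqNorm c K (Dop a) n ≤
          C * (n : ℝ) ^ (1 - c) * ⨆ j : ℕ, seqNorm c K a (n + 1 + j) := by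
  have hc0 : 0 < c := by linarith
  set T := ∑' j : ℕ, ((K / (2 * j + 1)) ^ (2 * c)) ^ j
  refine ⟨3 * K ^ c * T, fun a ha => ?_⟩
  have hodd : ∀ n, Summable fun j => ‖a (n + 2 * j + 1)‖ := fun n =>
    (summable_norm_of_bddAbove_seqNorm hc0 hK ha).comp_injective fun i j h => by omega
  refine ⟨fun n => (hodd n).of_norm, fun n hn => ?_⟩
  have hn0 : n ≠ 0 := by omega
  set S := ⨆ i, seqNorm c K a (n + 1 + i)
  have hS : 0 ≤ S := Real.iSup_nonneg fun i => seqNorm_nonneg hK a _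
  have hT : 0 ≤ T := tsum_nonneg fun j => by positivity
  calc seqNorm c K (Dop a) n
      ≤ (n + 2) * ∑' j, ((n : ℝ) / K) ^ (c * n) * ‖a (n + 2 * j + 1)‖ :=
        seqNorm_Dop_le_tsum hK (hodd n)
    _ ≤ (n + 2) * (S * ((K / n) ^ c * T)) := by
        gcongr
        exact tsum_weighted_norm_le hc0 hK ha hn0 (hodd n)
    _ = (n + 2) * (K / n) ^ c * T * S := by ring
    _ ≤ 3 * K ^ c * (n : ℝ) ^ (1 - c) * T * S := by
        gcongr ?_ * _ * _
        exact add_two_mul_div_rpow_le hK.le hn0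
    _ = 3 * K ^ c * T * (n : ℝ) ^ (1 - c) * S := by ring
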